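/- For z_k = 1 - k^{-p} with p > 1 (k ≥ 1), the sequence satisfies the Blaschke condition ∑_{k≥1}(1 - z_k) < ∞, and the associated Blaschke product B satisfies the estimate (1 - z_n²)|B'(z_n)| ≤ exp(-(n+1)/(2^p (p-1))) for all n ≥ 1. -/

import Mathlib

/-!
Near the zero `z_n` write `B = b_n · B_n`, where `b_n` is the factor vanishing at `z_n` and `B_n`
is the product of the other factors. Since `∑ (1 - z_k) < ∞`, the factors tend to `1` uniformly on
every disc `|w| ≤ ρ < 1`, so `B_n` is continuous and `B'(z_n) = b_n'(z_n) B_n(z_n)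
= -B_n(z_n) / (1 - z_n²)`; hence `(1 - z_n²) |B'(z_n)| = ∏_{k ≠ n} |b_k(z_n)|`. The factors with
`k < n` have modulus at most `1`, and for `k > n`, `|b_k(z_n)| ≤ 1 - (n/k)^p ≤ exp(-(n/k)^p)`.
Finally `∑_{k > n} k^{-p} ≥ (n+1)^{1-p} / (p-1)` by telescoping
`k^{1-p} - (k+1)^{1-p} ≤ (p-1) k^{-p}`, and `n^p (n+1)^{1-p} ≥ (n+1) / 2^p`.
-/

open scoped ComplexConjugate

/-- The Blaschke product with real zeros `z k = 1 - k^{-p}`, `k ≥ 1`. -/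
noncomputable def blaschkeP (p : ℝ) (w : ℂ) : ℂ :=
  ∏' k : ℕ, (((1 - ((k + 1 : ℕ) : ℝ) ^ (-p) : ℝ) : ℂ) - w) /
    (1 - ((1 - ((k + 1 : ℕ) : ℝ) ^ (-p) : ℝ) : ℂ) * w)

open Real Filter Topology Metric

theorem HasDerivAt.mul_continuousAt_of_eq_zero {𝕜 : Type*} [NontriviallyNormedField 𝕜]
    {f g : 𝕜 → 𝕜} {f' x : 𝕜} (hf : HasDerivAt f f' x) (hfx : f x = 0) (hg : ContinuousAt g x) :
    HasDerivAt (fun w ↦ f w * g w) (f' * g x) x := by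
  rw [hasDerivAt_iff_tendsto_slope] at hf ⊢
  refine (hf.mul (hg.tendsto.mono_left nhdsWithin_le_nhds)).congr fun w ↦ ?_
  simp only [slope_def_field, hfx, zero_mul, sub_zero]
  ring

theorem HasProdUniformlyOn.continuousOn {ι β α : Type*} [CommMonoid α] [UniformSpace α]
    [TopologicalSpace β] [ContinuousMul α] {f : ι → β → α} {g : β → α} {s : Set β}
    (h : HasProdUniformlyOn f g s) (hf : ∀ i, ContinuousOn (f i) s) : ContinuousOn g s :=
  h.tendstoUniformlyOn.continuousOn <| Frequently.of_forall fun t ↦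
    continuousOn_finsetProd t fun i _ ↦ hf i

theorem HasProd.norm_le_of_forall_norm_le {ι R : Type*} [NormedCommRing R] [NormOneClass R]
    {f : ι → R} {g : ι → ℝ} {a : R} {b : ℝ} (hf : HasProd f a) (hg : HasProd g b)
    (h : ∀ i, ‖f i‖ ≤ g i) : ‖a‖ ≤ b :=
  le_of_tendsto_of_tendsto' ((continuous_norm.tendsto a).comp hf) hg fun s ↦
    (Finset.norm_prod_le s f).trans <| Finset.prod_le_prod (fun _ _ ↦ norm_nonneg _) fun i _ ↦ h i

theorem rpow_one_sub_sub_rpow_one_sub_le {p k : ℝ} (hp : 1 ≤ p) (hk : 0 < k) :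
    k ^ (1 - p) - (k + 1) ^ (1 - p) ≤ (p - 1) * k ^ (-p) := by
  have bernoulli : 1 - (p - 1) * k⁻¹ ≤ (1 + k⁻¹) ^ (1 - p) := by
    have hlog := log_le_sub_one_of_pos (by positivity : 0 < 1 + k⁻¹)
    rw [rpow_def_of_pos (by positivity)]
    nlinarith [add_one_le_exp (log (1 + k⁻¹) * (1 - p)),
      mul_nonneg (sub_nonneg.2 hp) (by linarith : 0 ≤ k⁻¹ - log (1 + k⁻¹))]
  have hsplit : (k + 1) ^ (1 - p) = k ^ (1 - p) * (1 + k⁻¹) ^ (1 - p) := by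
    rw [← mul_rpow hk.le (by positivity), mul_add, mul_inv_cancel₀ hk.ne', mul_one]
  have hshift : k ^ (-p) = k ^ (1 - p) * k⁻¹ := by
    rw [← div_eq_mul_inv, ← rpow_sub_one hk.ne', sub_sub_cancel_left]
  rw [hsplit, hshift]
  nlinarith [rpow_pos_of_pos hk (1 - p)]

theorem Antitone.hasSum_sub_succ {f : ℕ → ℝ} {l : ℝ} (hf : Antitone f)
    (hl : Tendsto f atTop (𝓝 l)) : HasSum (fun n ↦ f n - f (n + 1)) (f 0 - l) := by
  rw [hasSum_iff_tendsto_nat_of_nonneg fun n ↦ sub_nonneg.2 (hf n.le_succ)]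
  simpa only [Finset.sum_range_sub'] using hl.const_sub (f 0)

theorem summable_nat_add_rpow_neg {p a : ℝ} (hp : 1 < p) (ha : 0 < a) :
    Summable fun i : ℕ ↦ ((i : ℝ) + a) ^ (-p) :=
  ((Real.summable_one_div_nat_add_rpow a p).2 hp).congr fun i ↦ by
    rw [abs_of_pos (by positivity), one_div, rpow_neg (by positivity)]

theorem rpow_one_sub_le_mul_tsum {p a : ℝ} (hp : 1 < p) (ha : 0 < a) :
    a ^ (1 - p) ≤ (p - 1) * ∑' i : ℕ, ((i : ℝ) + a) ^ (-p) := by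
  set f : ℕ → ℝ := fun i ↦ ((i : ℝ) + a) ^ (1 - p)
  have hanti : Antitone f := antitone_nat_of_succ_le fun i ↦
    rpow_le_rpow_of_nonpos (by positivity) (by push_cast; linarith) (by linarith)
  have hlim : Tendsto f atTop (𝓝 0) := by
    simpa [f, neg_sub, Function.comp_def] using
      (tendsto_rpow_neg_atTop (by linarith : 0 < p - 1)).comp
        (tendsto_natCast_atTop_atTop.atTop_add tendsto_const_nhds)
  have htel := hanti.hasSum_sub_succ hlim
  rw [sub_zero] at htel
  have hstep : ∀ i : ℕ, f i - f (i + 1) ≤ (p - 1) * ((i : ℝ) + a) ^ (-p) := fun i ↦ by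
    simpa only [f, Nat.cast_succ, add_right_comm] using
      rpow_one_sub_sub_rpow_one_sub_le hp.le (by positivity : 0 < (i : ℝ) + a)
  simpa [f, tsum_mul_left] using
    hasSum_le hstep htel ((summable_nat_add_rpow_neg hp ha).hasSum.mul_left (p - 1))

theorem add_one_div_le_rpow_mul_tsum {p x : ℝ} (hp : 1 < p) (hx : 1 ≤ x) :
    (x + 1) / (2 ^ p * (p - 1)) ≤ x ^ p * ∑' i : ℕ, ((i : ℝ) + (x + 1)) ^ (-p) := by
  have hsum := rpow_one_sub_le_mul_tsum hp (by linarith : 0 < x + 1)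
  have hpow : (x + 1) ^ p ≤ 2 ^ p * x ^ p := by
    rw [← mul_rpow (by norm_num) (by linarith)]
    exact rpow_le_rpow (by linarith) (by linarith) (by linarith)
  have hsplit : (x + 1) ^ (1 - p) = (x + 1) / (x + 1) ^ p := by
    rw [rpow_sub (by linarith), rpow_one]
  have hS : 0 ≤ ∑' i : ℕ, ((i : ℝ) + (x + 1)) ^ (-p) :=
    tsum_nonneg fun i ↦ rpow_nonneg (by positivity) _
  rw [hsplit, div_le_iff₀ (by positivity)] at hsum
  rw [div_le_iff₀ (mul_pos (rpow_pos_of_pos two_pos p) (by linarith))]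
  calc x + 1 ≤ ((p - 1) * ∑' i : ℕ, ((i : ℝ) + (x + 1)) ^ (-p)) * (x + 1) ^ p := hsum
    _ ≤ ((p - 1) * ∑' i : ℕ, ((i : ℝ) + (x + 1)) ^ (-p)) * (2 ^ p * x ^ p) :=
      mul_le_mul_of_nonneg_left hpow (mul_nonneg (by linarith) hS)
    _ = _ := by ring

noncomputable def blaschkeFactor (a : ℝ) (w : ℂ) : ℂ :=
  (a - w) / (1 - a * w)

theorem blaschkeFactor_ofReal (a x : ℝ) :
    blaschkeFactor a x = ((a - x) / (1 - a * x) : ℝ) := by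
  push_cast [blaschkeFactor]; rfl

theorem blaschkeFactor_self (a : ℝ) : blaschkeFactor a a = 0 := by
  simp [blaschkeFactor]

theorem hasDerivAt_blaschkeFactor_self {a : ℝ} (ha : |a| < 1) :
    HasDerivAt (blaschkeFactor a) (-(1 - (a : ℂ) ^ 2)⁻¹) a := by
  have hne : 1 - (a : ℂ) * a ≠ 0 := by
    norm_cast; nlinarith [abs_mul_abs_self a, abs_nonneg a]
  refine (((hasDerivAt_id (a : ℂ)).const_sub (a : ℂ)).div
    (((hasDerivAt_id (a : ℂ)).const_mul (a : ℂ)).const_sub 1) hne).congr_deriv ?_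
  simp only [id, sub_self, zero_mul, sub_zero, neg_one_mul, neg_div, sq]
  rw [div_mul_cancel_left₀ hne]

theorem sub_le_norm_one_sub_mul {a ρ : ℝ} {w : ℂ} (ha : |a| ≤ 1) (hw : ‖w‖ ≤ ρ) :
    1 - ρ ≤ ‖1 - a * w‖ := by
  have h := norm_sub_norm_le (1 : ℂ) (a * w)
  rw [norm_one, norm_mul, Complex.norm_real, Real.norm_eq_abs] at h
  nlinarith [norm_nonneg w]

theorem continuousOn_blaschkeFactor {a ρ : ℝ} (ha : |a| ≤ 1) (hρ : ρ < 1) :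
    ContinuousOn (blaschkeFactor a) (closedBall 0 ρ) := by
  refine (continuousOn_const.sub continuousOn_id).div
    (continuousOn_const.sub (continuousOn_const.mul continuousOn_id)) fun w hw ↦ ?_
  rw [mem_closedBall_zero_iff] at hw
  exact norm_pos_iff.1 ((sub_pos.2 hρ).trans_le (sub_le_norm_one_sub_mul ha hw))

theorem norm_blaschkeFactor_sub_one_le {a ρ : ℝ} {w : ℂ} (ha : |a| ≤ 1) (hρ : ρ < 1)
    (hw : ‖w‖ ≤ ρ) : ‖blaschkeFactor a w - 1‖ ≤ 2 * (1 - a) / (1 - ρ) := by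
  have hden := sub_le_norm_one_sub_mul ha hw
  have hne : 1 - (a : ℂ) * w ≠ 0 := norm_pos_iff.1 ((sub_pos.2 hρ).trans_le hden)
  have heq : blaschkeFactor a w - 1 = (a - 1 : ℝ) * (1 + w) / (1 - a * w) := by
    rw [blaschkeFactor]; field_simp; push_cast; ring
  have hnum : ‖1 + w‖ ≤ 2 := (norm_add_le _ _).trans (by rw [norm_one]; linarith)
  rw [heq, norm_div, norm_mul, Complex.norm_real, Real.norm_eq_abs,
    abs_of_nonpos (by linarith [le_abs_self a]), neg_sub]
  calc (1 - a) * ‖1 + w‖ / ‖1 - (a : ℂ) * w‖ ≤ (1 - a) * 2 / (1 - ρ) := by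
        gcongr
        all_goals linarith [le_abs_self a]
    _ = 2 * (1 - a) / (1 - ρ) := by ring

theorem abs_div_one_sub_mul_le_one {a x : ℝ} (ha : |a| ≤ 1) (hx : |x| ≤ 1) :
    |(a - x) / (1 - a * x)| ≤ 1 := by
  rw [abs_div]
  refine div_le_one_of_le₀ ?_ (abs_nonneg _)
  rw [← sq_le_sq]
  have ha2 := (sq_le_one_iff_abs_le_one a).2 ha
  have hx2 := (sq_le_one_iff_abs_le_one x).2 hx
  nlinarith [mul_nonneg (sub_nonneg.2 ha2) (sub_nonneg.2 hx2)]

theorem abs_one_sub_div_le_one_sub_div {a b : ℝ} (hb : 0 ≤ b) (hba : b ≤ a) (ha0 : 0 < a)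
    (ha : a ≤ 1) : |((1 - b) - (1 - a)) / (1 - (1 - b) * (1 - a))| ≤ 1 - b / a := by
  have hden : a ≤ 1 - (1 - b) * (1 - a) := by nlinarith
  rw [abs_of_nonneg (div_nonneg (by linarith) (by linarith)), one_sub_div ha0.ne']
  exact div_le_div_of_nonneg_left (by linarith) ha0 (by linarith) |>.trans_eq (by ring_nf)

section BlaschkeProduct

variable {a : ℕ → ℝ}

theorem hasProdUniformlyOn_ite_blaschkeFactor (ha : ∀ j, |a j| ≤ 1)
    (hs : Summable fun j ↦ 1 - a j) (m : ℕ) {ρ : ℝ} (hρ : ρ < 1) :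
    HasProdUniformlyOn (fun j w ↦ if j = m then 1 else blaschkeFactor (a j) w)
      (fun w ↦ ∏' j, if j = m then 1 else blaschkeFactor (a j) w) (closedBall 0 ρ) := by
  have hbound : ∀ j, ∀ w ∈ closedBall (0 : ℂ) ρ,
      ‖(if j = m then 1 else blaschkeFactor (a j) w) - 1‖ ≤ 2 * (1 - a j) / (1 - ρ) := by
    intro j w hw
    have hnonneg : 0 ≤ 2 * (1 - a j) / (1 - ρ) :=
      div_nonneg (by linarith [le_abs_self (a j), ha j]) (by linarith)
    split_ifs
    · simpa using hnonneg
    · exact norm_blaschkeFactor_sub_one_le (ha j) hρ (mem_closedBall_zero_iff.1 hw)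
  have hcont : ∀ j, ContinuousOn
      (fun w ↦ (if j = m then 1 else blaschkeFactor (a j) w) - 1) (closedBall 0 ρ) := by
    intro j
    split_ifs
    · exact continuousOn_const
    · exact (continuousOn_blaschkeFactor (ha j) hρ).sub continuousOn_const
  simpa only [add_sub_cancel] using Summable.hasProdUniformlyOn_one_add (isCompact_closedBall 0 ρ)
    ((hs.mul_left 2).div_const (1 - ρ)) (.of_forall hbound) hcont

theorem hasDerivAt_tprod_blaschkeFactor (ha : ∀ j, |a j| ≤ 1)
    (hs : Summable fun j ↦ 1 - a j) {m : ℕ} (ham : |a m| < 1) :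
    HasDerivAt (fun w ↦ ∏' j, blaschkeFactor (a j) w)
      (-(1 - (a m : ℂ) ^ 2)⁻¹ * ∏' j, if j = m then 1 else blaschkeFactor (a j) (a m)) (a m) := by
  obtain ⟨ρ, hamρ, hρ⟩ := exists_between ham
  have hprod := hasProdUniformlyOn_ite_blaschkeFactor ha hs m hρ
  have hnhds : closedBall (0 : ℂ) ρ ∈ 𝓝 (a m : ℂ) :=
    closedBall_mem_nhds_of_mem (by rwa [mem_ball_zero_iff, Complex.norm_real])
  have hrest : ContinuousAt (fun w ↦ ∏' j, if j = m then 1 else blaschkeFactor (a j) w) (a m) := by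
    refine (hprod.continuousOn fun j ↦ ?_).continuousAt hnhds
    split_ifs
    · exact continuousOn_const
    · exact continuousOn_blaschkeFactor (ha j) hρ
  refine ((hasDerivAt_blaschkeFactor_self ham).mul_continuousAt_of_eq_zero
    (blaschkeFactor_self _) hrest).congr_of_eventuallyEq ?_
  filter_upwards [hnhds] with w hw
  refine Multipliable.tprod_eq_mul_tprod_ite' m ?_
  exact (hprod.hasProd hw).multipliable.congr fun j ↦ by simp [Function.update_apply]

theorem one_sub_sq_mul_norm_deriv_tprod_blaschkeFactor (ha : ∀ j, |a j| ≤ 1)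
    (hs : Summable fun j ↦ 1 - a j) {m : ℕ} (ham : |a m| < 1) :
    (1 - a m ^ 2) * ‖deriv (fun w ↦ ∏' j, blaschkeFactor (a j) w) (a m)‖ =
      ‖∏' j, if j = m then 1 else blaschkeFactor (a j) (a m)‖ := by
  have hpos : 0 < 1 - a m ^ 2 := by nlinarith [(sq_lt_one_iff_abs_lt_one (a m)).2 ham]
  rw [(hasDerivAt_tprod_blaschkeFactor ha hs ham).deriv, norm_mul, norm_neg, norm_inv,
    show 1 - (a m : ℂ) ^ 2 = (1 - a m ^ 2 : ℝ) by push_cast; rfl, Complex.norm_real,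
    Real.norm_eq_abs, abs_of_pos hpos, mul_inv_cancel_left₀ hpos.ne']

end BlaschkeProduct

noncomputable def blaschkeZero (p : ℝ) (k : ℕ) : ℝ := 1 - (k : ℝ) ^ (-p)

theorem blaschkeP_eq_tprod (p : ℝ) :
    blaschkeP p = fun w ↦ ∏' j : ℕ, blaschkeFactor (blaschkeZero p (j + 1)) w :=
  rfl

theorem summable_one_sub_blaschkeZero {p : ℝ} (hp : 1 < p) :
    Summable fun k : ℕ ↦ 1 - blaschkeZero p (k + 1) := by
  simpa [blaschkeZero] using summable_nat_add_rpow_neg hp one_pos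

theorem blaschkeZero_nonneg {p : ℝ} (hp : 0 ≤ p) {k : ℕ} (hk : 1 ≤ k) :
    0 ≤ blaschkeZero p k :=
  sub_nonneg.2 (rpow_le_one_of_one_le_of_nonpos (by exact_mod_cast hk) (neg_nonpos.2 hp))

theorem abs_blaschkeZero_lt_one {p : ℝ} (hp : 0 ≤ p) {k : ℕ} (hk : 1 ≤ k) :
    |blaschkeZero p k| < 1 := by
  rw [abs_of_nonneg (blaschkeZero_nonneg hp hk), blaschkeZero, sub_lt_self_iff]
  exact rpow_pos_of_pos (by exact_mod_cast hk) _

theorem norm_blaschkeFactor_blaschkeZero_le {p : ℝ} (hp : 0 ≤ p) {n k : ℕ} (hn : 1 ≤ n)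
    (hnk : n ≤ k) :
    ‖blaschkeFactor (blaschkeZero p k) (blaschkeZero p n)‖ ≤
      exp (-((n : ℝ) ^ p * (k : ℝ) ^ (-p))) := by
  have hn' : (0 : ℝ) < n := by exact_mod_cast hn
  rw [blaschkeFactor_ofReal, Complex.norm_real, Real.norm_eq_abs]
  refine (abs_one_sub_div_le_one_sub_div (rpow_nonneg (by positivity) _)
    (rpow_le_rpow_of_nonpos hn' (by exact_mod_cast hnk) (neg_nonpos.2 hp))
    (rpow_pos_of_pos hn' _)
    (rpow_le_one_of_one_le_of_nonpos (by exact_mod_cast hn) (neg_nonpos.2 hp))).trans ?_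
  rw [rpow_neg hn'.le, div_inv_eq_mul, mul_comm]
  linarith [add_one_le_exp (-((n : ℝ) ^ p * (k : ℝ) ^ (-p)))]

theorem norm_tprod_ite_blaschkeFactor_le {p : ℝ} (hp : 1 < p) (m : ℕ) :
    ‖∏' j, if j = m then 1 else blaschkeFactor (blaschkeZero p (j + 1)) (blaschkeZero p (m + 1))‖ ≤
      exp (-(((m + 1 : ℕ) : ℝ) ^ p * ∑' i : ℕ, ((i : ℝ) + ((m + 1 : ℕ) + 1)) ^ (-p))) := by
  set n := m + 1
  have habs : ∀ k, 1 ≤ k → |blaschkeZero p k| < 1 :=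
    fun _ ↦ abs_blaschkeZero_lt_one (by linarith)
  set θ : ℕ → ℝ := fun j ↦ if j < n then 0 else (n : ℝ) ^ p * ((j + 1 : ℕ) : ℝ) ^ (-p)
  have hθ : HasSum θ ((n : ℝ) ^ p * ∑' i : ℕ, ((i : ℝ) + (n + 1)) ^ (-p)) := by
    rw [← hasSum_nat_add_iff' n, Finset.sum_eq_zero fun j hj ↦ if_pos (Finset.mem_range.1 hj),
      sub_zero]
    refine ((summable_nat_add_rpow_neg hp (by positivity)).hasSum.mul_left _).congr_fun fun i ↦ ?_
    simp only [θ, if_neg (by omega : ¬ i + n < n)]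
    push_cast; ring_nf
  have hprod := (hasProdUniformlyOn_ite_blaschkeFactor (fun j ↦ (habs (j + 1) le_add_self).le)
    (summable_one_sub_blaschkeZero hp) m (habs n le_add_self)).hasProd
    (x := (blaschkeZero p n : ℂ)) (by
      rw [mem_closedBall_zero_iff, Complex.norm_real, Real.norm_eq_abs])
  refine hprod.norm_le_of_forall_norm_le hθ.neg.rexp fun j ↦ ?_
  simp only [Function.comp_apply, θ]
  split_ifs with hjm hjn hjn
  · simp
  · omega
  · rw [blaschkeFactor_ofReal, Complex.norm_real, Real.norm_eq_abs, neg_zero, exp_zero]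
    exact abs_div_one_sub_mul_le_one (habs (j + 1) le_add_self).le (habs n le_add_self).le
  · exact norm_blaschkeFactor_blaschkeZero_le (by linarith) le_add_self (by omega)

/-- for `z_k = 1 - k^{-p}`, `p > 1`, the Blaschke condition holds
and `(1 - z_n²)|B'(z_n)| ≤ exp(-(n+1)/(2^p (p-1)))` for all `n ≥ 1`. -/
theorem blaschke_derivative_estimate (p : ℝ) (hp : 1 < p)
    (z : ℕ → ℝ) (hz : ∀ k, z k = 1 - (k : ℝ) ^ (-p)) :
    (Summable fun k : ℕ => 1 - z (k + 1)) ∧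
    ∀ n : ℕ, 1 ≤ n →
      (1 - z n ^ 2) * ‖deriv (blaschkeP p) ((z n : ℝ) : ℂ)‖ ≤
        Real.exp (-((n : ℝ) + 1) / (2 ^ p * (p - 1))) := by
  obtain rfl : z = blaschkeZero p := funext hz
  refine ⟨summable_one_sub_blaschkeZero hp, fun n hn ↦ ?_⟩
  obtain ⟨m, rfl⟩ := Nat.exists_eq_add_of_le' hn
  have habs : ∀ k, 1 ≤ k → |blaschkeZero p k| < 1 :=
    fun _ ↦ abs_blaschkeZero_lt_one (by linarith)
  rw [blaschkeP_eq_tprod, one_sub_sq_mul_norm_deriv_tprod_blaschkeFactor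
    (fun j ↦ (habs (j + 1) le_add_self).le) (summable_one_sub_blaschkeZero hp)
    (habs (m + 1) le_add_self)]
  refine (norm_tprod_ite_blaschkeFactor_le hp m).trans (exp_le_exp.2 ?_)
  rw [neg_div, neg_le_neg_iff]
  exact add_one_div_le_rpow_mul_tsum hp (by exact_mod_cast hn)
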